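/- Let (R, m, k) be a local ring, F a finitely generated free R-module, M a finitely generated R-module, and φ : F → M an R-linear map. Then φ is a split injection if and only if φ ⊗ id_{E_R(k)} : F ⊗_R E_R(k) → M ⊗_R E_R(k) is injective, where E_R(k) is the injective hull of the residue field. -/

import Mathlib

set_option linter.unusedVariables false

open TensorProduct Filter IsLocalRing

section Defs

variable (R : Type*) [CommRing R] (p : ℕ) [Fact p.Prime] [CharP R p]

/-- `M` with the `R`-action twisted by the `e`-th Frobenius: `r • m = r^{p^e} • m`.
For `M = R` this is the module `R^{(e)} ≅ R^{1/p^e}`. -/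
def Twist (R : Type*) (p : ℕ) (M : Type*) (e : ℕ) : Type _ := M

instance (M : Type*) [AddCommGroup M] (e : ℕ) : AddCommGroup (Twist R p M e) :=
  inferInstanceAs (AddCommGroup M)

instance (M : Type*) [AddCommGroup M] [Module R M] (e : ℕ) : Module R (Twist R p M e) where
  smul r m := (r ^ p ^ e • (show M from m) : M)
  one_smul m := by
    change (1 : R) ^ p ^ e • (show M from m) = (show M from m)
    simp only [one_pow]; exact one_smul R (show M from m)
  mul_smul a b m := by
    change (a * b) ^ p ^ e • (show M from m) =
      a ^ p ^ e • (b ^ p ^ e • (show M from m))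
    rw [mul_pow, mul_smul]
  smul_zero r := by
    change r ^ p ^ e • (0 : M) = (0 : M); simp
  smul_add r x y := by
    change r ^ p ^ e • ((show M from x) + (show M from y)) =
      r ^ p ^ e • (show M from x) + r ^ p ^ e • (show M from y)
    rw [smul_add]
  add_smul a b m := by
    change (a + b) ^ p ^ e • (show M from m) =
      a ^ p ^ e • (show M from m) + b ^ p ^ e • (show M from m)
    rw [add_pow_char_pow, add_smul]
  zero_smul m := by
    change (0 : R) ^ p ^ e • (show M from m) = (0 : M)
    rw [zero_pow (pow_ne_zero e (Fact.out : p.Prime).ne_zero), zero_smul]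

/-- The identity map `M → Twist R p M e`. -/
def toTwist (R : Type*) (p : ℕ) {M : Type*} (m : M) (e : ℕ) : Twist R p M e := m

/-- The map `φ_{c,e} : R → R^{1/p^e}`, `1 ↦ c^{1/p^e}`, splits over `R`. -/
def SplitsFrob (c : R) (e : ℕ) : Prop :=
  ∃ ψ : Twist R p R e →ₗ[R] R, ψ (toTwist R p c e) = 1

/-- The splitting prime `𝒫(R)`. -/
def SplittingPrimeSet : Set R := { c | ∀ᶠ e in atTop, ¬ SplitsFrob R p c e }

/-- `R` is `F`-pure: `R → R^{1/p}` splits. -/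
def IsFPure : Prop := SplitsFrob R p 1 1

/-- `R` is `F`-finite: `R^{1/p}` is a finite `R`-module. -/
def IsFFinite : Prop := Module.Finite R (Twist R p R 1)

/-- `R` is strongly `F`-regular. -/
def StronglyFRegular : Prop :=
  ∀ c : R, (∀ Q ∈ minimalPrimes R, c ∉ Q) → ∃ e, SplitsFrob R p c e

/-- `n` is the maximal rank of a free direct summand of `M`:
`M ≅ R^n ⊕ N` with `N` having no nonzero free direct summand. -/
def MaxFreeRank (M : Type*) [AddCommGroup M] [Module R M] (n : ℕ) : Prop :=
  ∃ (N : Submodule R M) (_ : M ≃ₗ[R] ((Fin n → R) × N)),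
    ¬ ∃ g : N →ₗ[R] R, Function.Surjective g

end Defs

section Hull

variable (R : Type*) [CommRing R] [IsLocalRing R]

/-- `E` is an injective hull of the residue field, with socle generator `u`. -/
def IsInjHullSocle (E : Type*) [AddCommGroup E] [Module R E] (u : E) : Prop :=
  Module.Injective R E ∧ u ≠ 0 ∧ (∀ r ∈ maximalIdeal R, r • u = 0) ∧
    (∀ x : E, (∀ r ∈ maximalIdeal R, r • x = 0) → x ∈ Submodule.span R {u}) ∧
    ∀ N : Submodule R E, N ≠ ⊥ → u ∈ N

end Hull

section Ae

variable (R : Type*) [CommRing R] (p : ℕ) [Fact p.Prime] [CharP R p]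

/-- The ideal `A_e = {r ∈ R : r ⊗ u = 0 in R^{(e)} ⊗_R E}`. -/
def AeSet (E : Type*) [AddCommGroup E] [Module R E] (u : E) (e : ℕ) : Set R :=
  { r | (toTwist R p r e ⊗ₜ[R] u : Twist R p R e ⊗[R] E) = 0 }

end Ae

/-- The length of a module, as the Krull dimension of its lattice of submodules. -/
noncomputable def moduleLength (R M : Type*) [CommRing R] [AddCommGroup M] [Module R M] :
    WithBot ℕ∞ := Order.krullDim (Submodule R M)

/-- A regular local ring: the maximal ideal is generated by `dim R` elements. -/
def IsRegularLocal (R : Type*) [CommRing R] [IsLocalRing R] : Prop :=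
  IsNoetherianRing R ∧ ∃ s : Finset R,
    Ideal.span (s : Set R) = maximalIdeal R ∧ (s.card : WithBot ℕ∞) = ringKrullDim R


set_option maxRecDepth 4000

section EvMap

variable {R : Type*} [CommRing R] {E : Type*} [AddCommGroup E] [Module R E]

/-- Evaluation pairing `M ⊗ E → Hom(Hom(M,R), E)`. -/
noncomputable def evAux (R : Type*) [CommRing R] (M : Type*) [AddCommGroup M] [Module R M]
    (E : Type*) [AddCommGroup E] [Module R E] (m : M) (e : E) : (M →ₗ[R] R) →ₗ[R] E where
  toFun l := l m • e
  map_add' l l' := by simp [add_smul]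
  map_smul' c l := by simp [mul_smul]

@[simp] lemma evAux_apply {R : Type*} [CommRing R] {M : Type*} [AddCommGroup M] [Module R M]
    {E : Type*} [AddCommGroup E] [Module R E] (m : M) (e : E) (l : M →ₗ[R] R) :
    evAux R M E m e l = l m • e := rfl

/-- Evaluation pairing `M ⊗ E → Hom(Hom(M,R), E)`. -/
noncomputable def evMap (R : Type*) [CommRing R] (M : Type*) [AddCommGroup M] [Module R M]
    (E : Type*) [AddCommGroup E] [Module R E] :
    M ⊗[R] E →ₗ[R] ((M →ₗ[R] R) →ₗ[R] E) :=
  TensorProduct.lift (LinearMap.mk₂ R (evAux R M E)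
    (fun m m' e => LinearMap.ext fun l => by
      show l (m + m') • e = l m • e + l m' • e
      rw [map_add, add_smul])
    (fun c m e => LinearMap.ext fun l => by
      show l (c • m) • e = c • (l m • e)
      rw [map_smul, smul_eq_mul, mul_smul])
    (fun m e e' => LinearMap.ext fun l => by
      show l m • (e + e') = l m • e + l m • e'
      rw [smul_add])
    (fun c m e => LinearMap.ext fun l => by
      show l m • (c • e) = c • (l m • e)
      rw [smul_comm]))

@[simp] lemma evMap_tmul {M : Type*} [AddCommGroup M] [Module R M] (m : M) (e : E)
    (l : M →ₗ[R] R) : evMap R M E (m ⊗ₜ[R] e) l = l m • e := rfl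

lemma evMap_naturality {M N : Type*} [AddCommGroup M] [Module R M] [AddCommGroup N] [Module R N]
    (f : M →ₗ[R] N) (z : M ⊗[R] E) (l : N →ₗ[R] R) :
    evMap R N E (LinearMap.rTensor E f z) l = evMap R M E z (l ∘ₗ f) := by
  induction z using TensorProduct.induction_on with
  | zero => simp
  | tmul m e => simp
  | add x y hx hy => simp [hx, hy]

lemma evMap_expand {F : Type*} [AddCommGroup F] [Module R F] {n : ℕ} (b : Module.Basis (Fin n) R F)
    (z : F ⊗[R] E) : z = ∑ j, b j ⊗ₜ[R] evMap R F E z (b.coord j) := by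
  induction z using TensorProduct.induction_on with
  | zero => simp
  | tmul x e =>
    conv_lhs => rw [← b.sum_repr x, TensorProduct.sum_tmul]
    refine Finset.sum_congr rfl fun j _ => ?_
    rw [TensorProduct.smul_tmul, evMap_tmul, Module.Basis.coord_apply]
  | add x y hx hy =>
    simp only [map_add, LinearMap.add_apply, TensorProduct.tmul_add]
    rw [Finset.sum_add_distrib]
    exact congrArg₂ (· + ·) hx hy

lemma evMap_injective_free {F : Type*} [AddCommGroup F] [Module R F] {n : ℕ}
    (b : Module.Basis (Fin n) R F) : Function.Injective (evMap R F E) := by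
  intro z w h
  rw [evMap_expand b z, evMap_expand b w, h]

lemma dual_expand {F : Type*} [AddCommGroup F] [Module R F] {n : ℕ} (b : Module.Basis (Fin n) R F)
    (l : F →ₗ[R] R) (x : F) : l x = ∑ j, l (b j) * b.coord j x := by
  conv_lhs => rw [← b.sum_repr x, map_sum]
  refine Finset.sum_congr rfl fun j _ => ?_
  rw [map_smul, Module.Basis.coord_apply, smul_eq_mul, mul_comm]

lemma evMap_surjective_free {F : Type*} [AddCommGroup F] [Module R F] {n : ℕ}
    (b : Module.Basis (Fin n) R F) (θ : (F →ₗ[R] R) →ₗ[R] E) : ∃ z, evMap R F E z = θ := by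
  refine ⟨∑ j, b j ⊗ₜ[R] θ (b.coord j), ?_⟩
  ext l
  rw [map_sum, LinearMap.sum_apply]
  have : ∀ j, evMap R F E (b j ⊗ₜ[R] θ (b.coord j)) l = θ (l (b j) • b.coord j) := by
    intro j; rw [evMap_tmul, map_smul]
  rw [Finset.sum_congr rfl fun j _ => this j, ← map_sum]
  congr 1
  ext x
  rw [LinearMap.sum_apply]
  simp only [LinearMap.smul_apply, smul_eq_mul]
  exact (dual_expand b l x).symm

end EvMap

section Helpers

variable {R : Type*} [CommRing R]

lemma exists_comp_eq_of_ker_le {A B C : Type*} [AddCommGroup A] [Module R A]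
    [AddCommGroup B] [Module R B] [AddCommGroup C] [Module R C]
    (π : A →ₗ[R] B) (hπ : Function.Surjective π) (μ : A →ₗ[R] C)
    (h : LinearMap.ker π ≤ LinearMap.ker μ) : ∃ lam : B →ₗ[R] C, lam ∘ₗ π = μ := by
  have key : ∀ x y : A, π x = π y → μ x = μ y := by
    intro x y hxy
    have hxk : x - y ∈ LinearMap.ker π := by
      rw [LinearMap.mem_ker, map_sub, hxy, sub_self]
    have := h hxk
    rw [LinearMap.mem_ker, map_sub, sub_eq_zero] at this
    exact this
  refine ⟨{ toFun := fun b => μ (Function.surjInv hπ b)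
            map_add' := ?_, map_smul' := ?_ }, ?_⟩
  · intro p q
    rw [← map_add]
    exact key _ _ (by rw [map_add]; simp only [Function.surjInv_eq hπ])
  · intro c p
    simp only [RingHom.id_apply]
    rw [← map_smul]
    exact key _ _ (by rw [map_smul]; simp only [Function.surjInv_eq hπ])
  · apply LinearMap.ext
    intro x
    exact key _ _ (Function.surjInv_eq hπ (π x))

lemma exists_fin_map_range_eq {M : Type*} [AddCommGroup M] [Module R M]
    (N : Submodule R M) (hN : N.FG) :
    ∃ (n : ℕ) (g : (Fin n → R) →ₗ[R] M), LinearMap.range g = N := by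
  obtain ⟨s, hs⟩ := hN
  refine ⟨s.card, Fintype.linearCombination R (fun i : Fin s.card => (s.equivFin.symm i : M)), ?_⟩
  rw [Fintype.range_linearCombination]
  rw [← hs]
  congr 1
  ext x
  constructor
  · rintro ⟨i, rfl⟩; exact (s.equivFin.symm i).2
  · intro hx; exact ⟨s.equivFin ⟨x, hx⟩, by simp⟩

end Helpers

section Cogen

variable {R : Type*} [CommRing R] [IsLocalRing R] {E : Type*} [AddCommGroup E] [Module R E]

lemma exists_functional_ne_zero (hB : Module.Baer R E) {u : E} (hu : u ≠ 0)
    (hmu : ∀ r ∈ maximalIdeal R, r • u = 0)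
    {Q : Type*} [AddCommGroup Q] [Module R Q] {x : Q} (hx : x ≠ 0) :
    ∃ θ : Q →ₗ[R] E, θ x ≠ 0 := by
  set g : R →ₗ[R] Q := LinearMap.toSpanSingleton R Q x with hg
  have hker1 : LinearMap.ker g ≠ ⊤ := by
    intro h
    have h1 : (1 : R) ∈ LinearMap.ker g := h ▸ Submodule.mem_top
    rw [LinearMap.mem_ker, hg, LinearMap.toSpanSingleton_apply, one_smul] at h1
    exact hx h1
  have hkerm : LinearMap.ker g ≤ maximalIdeal R := IsLocalRing.le_maximalIdeal hker1
  have hker2 : LinearMap.ker g ≤ LinearMap.ker (LinearMap.toSpanSingleton R E u) := by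
    intro r hr
    rw [LinearMap.mem_ker, LinearMap.toSpanSingleton_apply]
    exact hmu r (hkerm hr)
  set gbar : (R ⧸ LinearMap.ker g) →ₗ[R] Q := (LinearMap.ker g).liftQ g le_rfl with hgbar
  have hgbarinj : Function.Injective gbar := by
    rw [← LinearMap.ker_eq_bot]
    exact Submodule.ker_liftQ_eq_bot _ _ _ le_rfl
  set fbar : (R ⧸ LinearMap.ker g) →ₗ[R] E :=
    (LinearMap.ker g).liftQ (LinearMap.toSpanSingleton R E u) hker2 with hfbar
  obtain ⟨θ, hθ⟩ := hB.extension_property gbar hgbarinj fbar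
  refine ⟨θ, ?_⟩
  have h1 : gbar (Submodule.Quotient.mk 1) = x := by
    rw [hgbar, Submodule.liftQ_apply, hg, LinearMap.toSpanSingleton_apply, one_smul]
  have h2 : fbar (Submodule.Quotient.mk 1) = u := by
    rw [hfbar, Submodule.liftQ_apply, LinearMap.toSpanSingleton_apply, one_smul]
  have := LinearMap.congr_fun hθ (Submodule.Quotient.mk 1)
  rw [LinearMap.comp_apply, h1, h2] at this
  rw [this]
  exact hu

end Cogen

section EvInj

variable {R : Type*} [CommRing R] {E : Type*} [AddCommGroup E] [Module R E]

lemma evMap_injective_fg [IsNoetherianRing R] (hB : Module.Baer R E)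
    (M : Type*) [AddCommGroup M] [Module R M] [Module.Finite R M] :
    Function.Injective (evMap R M E) := by
  obtain ⟨bn, π, hπ⟩ := Module.Finite.exists_fin' R M
  obtain ⟨an, g, hg⟩ := exists_fin_map_range_eq (LinearMap.ker π) (IsNoetherian.noetherian _)
  suffices h0 : ∀ w, evMap R M E w = 0 → w = 0 by
    intro z w h
    have := h0 (z - w) (by rw [map_sub, h, sub_self])
    exact sub_eq_zero.mp this
  intro w hw
  obtain ⟨y, rfl⟩ := LinearMap.rTensor_surjective E hπ w
  set θ : ((Fin bn → R) →ₗ[R] R) →ₗ[R] E := evMap R (Fin bn → R) E y with hθdef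
  have hθ : ∀ μ : (Fin bn → R) →ₗ[R] R, μ ∘ₗ g = 0 → θ μ = 0 := by
    intro μ hμ
    have hker : LinearMap.ker π ≤ LinearMap.ker μ := by
      rw [← hg]
      rintro x ⟨c, rfl⟩
      rw [LinearMap.mem_ker, ← LinearMap.comp_apply, hμ, LinearMap.zero_apply]
    obtain ⟨lam, hlam⟩ := exists_comp_eq_of_ker_le π hπ μ hker
    have : θ μ = evMap R M E (LinearMap.rTensor E π y) lam := by
      rw [evMap_naturality, hlam]
    rw [this, hw, LinearMap.zero_apply]
  set D : ((Fin bn → R) →ₗ[R] R) →ₗ[R] ((Fin an → R) →ₗ[R] R) := LinearMap.lcomp R R g with hD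
  have hkerD : LinearMap.ker D ≤ LinearMap.ker θ := by
    intro μ hμ
    rw [LinearMap.mem_ker] at hμ ⊢
    exact hθ μ hμ
  set gbar : (((Fin bn → R) →ₗ[R] R) ⧸ LinearMap.ker D) →ₗ[R] ((Fin an → R) →ₗ[R] R) :=
    (LinearMap.ker D).liftQ D le_rfl with hgbar
  have hgbarinj : Function.Injective gbar := by
    rw [← LinearMap.ker_eq_bot]
    exact Submodule.ker_liftQ_eq_bot _ _ _ le_rfl
  set θbar : (((Fin bn → R) →ₗ[R] R) ⧸ LinearMap.ker D) →ₗ[R] E :=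
    (LinearMap.ker D).liftQ θ hkerD with hθbar
  obtain ⟨η, hη⟩ := hB.extension_property gbar hgbarinj θbar
  obtain ⟨v, hv⟩ := evMap_surjective_free (Pi.basisFun R (Fin an)) η
  have key : evMap R (Fin bn → R) E (LinearMap.rTensor E g v) = θ := by
    ext μ
    rw [evMap_naturality, hv]
    have h1 := LinearMap.congr_fun hη (Submodule.Quotient.mk μ)
    rw [LinearMap.comp_apply, hgbar, Submodule.liftQ_apply, hθbar, Submodule.liftQ_apply] at h1
    rw [← h1]
    rfl
  have hy : y = LinearMap.rTensor E g v :=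
    evMap_injective_free (Pi.basisFun R (Fin bn)) (by rw [key])
  have hπg : π ∘ₗ g = 0 := by
    apply LinearMap.ext
    intro c
    have : g c ∈ LinearMap.ker π := hg ▸ LinearMap.mem_range_self g c
    rw [LinearMap.mem_ker] at this
    exact this
  rw [hy, ← LinearMap.rTensor_comp_apply, hπg, LinearMap.rTensor_zero, LinearMap.zero_apply]

end EvInj

section SmallQuot

universe uR uE

variable {R : Type uR} [CommRing R]

lemma out_sub_mem (m : Submodule R R) (r : R) :
    Quotient.out ((Submodule.Quotient.mk r : R ⧸ m)) - r ∈ m :=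
  (Submodule.Quotient.eq m).mp (Quotient.out_eq _)

lemma small_quotient_of_smul (m a : Submodule R R) (hfg : a.FG)
    (h1 : Small.{uE} (R ⧸ a)) (h2 : Small.{uE} (R ⧸ m)) :
    Small.{uE} (R ⧸ (m • a : Submodule R R)) := by
  obtain ⟨s, hs⟩ := hfg
  set J : Submodule R R := m • a with hJ
  set Sb : Submodule R (R ⧸ J) := Submodule.map J.mkQ a with hSb
  have hxs : ∀ i : Fin s.card, (s.equivFin.symm i : R) ∈ a := fun i => by
    rw [← hs]; exact Submodule.subset_span (s.equivFin.symm i).2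
  have hSbSmall : Small.{uE} Sb := by
    set gg : (Fin s.card → R ⧸ m) → Sb := fun w =>
      ⟨J.mkQ (∑ i, Quotient.out (w i) * (s.equivFin.symm i : R)),
        ⟨_, Submodule.sum_mem a (fun i _ => a.smul_mem (Quotient.out (w i)) (hxs i)), rfl⟩⟩
      with hgg
    haveI : Small.{uE} (Fin s.card → R ⧸ m) := by infer_instance
    apply small_of_surjective (f := gg)
    rintro ⟨z, y, hy, rfl⟩
    rw [← hs] at hy
    obtain ⟨c, -, hc⟩ := Submodule.mem_span_finset.mp hy
    refine ⟨fun i => (Submodule.Quotient.mk (c (s.equivFin.symm i)) : R ⧸ m), ?_⟩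
    apply Subtype.ext
    rw [hgg]
    show J.mkQ _ = J.mkQ y
    rw [← sub_eq_zero, ← map_sub, Submodule.mkQ_apply, Submodule.Quotient.mk_eq_zero]
    have hy' : y = ∑ i, c (s.equivFin.symm i : R) * (s.equivFin.symm i : R) := by
      rw [← hc, ← Finset.sum_coe_sort s (fun r => c r • r),
        ← Equiv.sum_comp s.equivFin.symm (fun j : s => c (j : R) • (j : R))]
      simp [smul_eq_mul]
    rw [hy', ← Finset.sum_sub_distrib]
    apply Submodule.sum_mem
    intro i _
    rw [← sub_mul]
    exact Submodule.smul_mem_smul (out_sub_mem m _) (hxs i)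
  set C : (R ⧸ J) → R := fun y =>
    Quotient.out ((Submodule.Quotient.mk (Quotient.out y) : R ⧸ a)) with hC
  have hCmem : ∀ y, Quotient.out y - C y ∈ a := by
    intro y
    rw [hC]
    have := out_sub_mem a (Quotient.out y)
    simpa using a.neg_mem this
  set jm : (R ⧸ J) → (R ⧸ a) × Sb := fun y =>
    ⟨(Submodule.Quotient.mk (Quotient.out y) : R ⧸ a),
      ⟨J.mkQ (Quotient.out y - C y), ⟨_, hCmem y, rfl⟩⟩⟩ with hjm
  apply small_of_injective (f := jm)
  intro y y' h
  have h1 : (Submodule.Quotient.mk (Quotient.out y) : R ⧸ a)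
      = Submodule.Quotient.mk (Quotient.out y') := congrArg Prod.fst h
  have hCeq : C y = C y' := by rw [hC]; exact congrArg Quotient.out h1
  have h2 : J.mkQ (Quotient.out y - C y) = J.mkQ (Quotient.out y' - C y') :=
    congrArg (fun p => (p.2 : R ⧸ J)) h
  rw [hCeq] at h2
  rw [map_sub, map_sub, sub_left_inj] at h2
  rw [Submodule.mkQ_apply, Submodule.mkQ_apply] at h2
  rw [← Quotient.out_eq y, ← Quotient.out_eq y']
  exact h2

end SmallQuot

section Baer

universe uR uE

variable {R : Type uR} [CommRing R] [IsNoetherianRing R] [IsLocalRing R]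
variable {E : Type uE} [AddCommGroup E] [Module R E]

lemma baer_of_socle (hinj : Module.Injective R E)
    {u : E} (hu : u ≠ 0) (hmu : ∀ r ∈ maximalIdeal R, r • u = 0) : Module.Baer R E := by
  -- the injective map k = R/m → E, r ↦ r • u
  have hkeru : LinearMap.ker (LinearMap.toSpanSingleton R E u) ≤ maximalIdeal R := by
    apply IsLocalRing.le_maximalIdeal
    intro h
    have h1 : (1 : R) ∈ LinearMap.ker (LinearMap.toSpanSingleton R E u) := h ▸ Submodule.mem_top
    rw [LinearMap.mem_ker, LinearMap.toSpanSingleton_apply, one_smul] at h1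
    exact hu h1
  have hmkeru : (maximalIdeal R : Submodule R R) ≤ LinearMap.ker (LinearMap.toSpanSingleton R E u) := by
    intro r hr
    rw [LinearMap.mem_ker, LinearMap.toSpanSingleton_apply]
    exact hmu r hr
  set f : (R ⧸ (maximalIdeal R : Submodule R R)) →ₗ[R] E :=
    (maximalIdeal R : Submodule R R).liftQ (LinearMap.toSpanSingleton R E u) hmkeru with hf
  have hfinj : Function.Injective f := by
    rw [← LinearMap.ker_eq_bot]
    exact Submodule.ker_liftQ_eq_bot _ _ _ hkeru
  haveI hSk : Small.{uE} (R ⧸ (maximalIdeal R : Submodule R R)) := small_of_injective hfinj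
  -- step 1: annihilator is trivial
  have hann : Module.annihilator R E = ⊥ := by
    by_contra ha
    set a : Ideal R := Module.annihilator R E with hadef
    have hfga : a.FG := IsNoetherian.noetherian a
    have hnle : ¬ (a : Submodule R R) ≤ (maximalIdeal R : Ideal R) • a := by
      intro hle
      exact ha (Submodule.eq_bot_of_le_smul_of_le_jacobson_bot (maximalIdeal R) a hfga hle
        (le_of_eq (IsLocalRing.jacobson_eq_maximalIdeal ⊥ bot_ne_top).symm))
    rw [SetLike.not_le_iff_exists] at hnle
    obtain ⟨x, hxa, hxma⟩ := hnle
    set J : Submodule R R := (maximalIdeal R : Ideal R) • a with hJdef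
    -- Small instances
    haveI hSa : Small.{uE} (R ⧸ (a : Submodule R R)) := by
      set am : (R ⧸ (a : Submodule R R)) → (E → E) := fun c e => Quotient.out c • e with ham
      apply small_of_injective (f := am)
      intro c c' h
      have h2 : ∀ e : E, (Quotient.out c - Quotient.out c') • e = 0 := by
        intro e
        rw [sub_smul, sub_eq_zero]
        exact congrFun h e
      have h3 : Quotient.out c - Quotient.out c' ∈ a := Module.mem_annihilator.mpr h2
      rw [← Quotient.out_eq c, ← Quotient.out_eq c']
      exact (Submodule.Quotient.eq _).mpr h3
    haveI hSY : Small.{uE} (R ⧸ J) :=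
      small_quotient_of_smul (maximalIdeal R : Submodule R R) a hfga hSa hSk
    -- the map i : k → R/J, class of r ↦ class of r*x
    have hmkerx : (maximalIdeal R : Submodule R R) ≤
        LinearMap.ker (LinearMap.toSpanSingleton R (R ⧸ J) (Submodule.Quotient.mk x)) := by
      intro r hr
      rw [LinearMap.mem_ker, LinearMap.toSpanSingleton_apply, ← Submodule.Quotient.mk_smul,
        Submodule.Quotient.mk_eq_zero]
      exact Submodule.smul_mem_smul hr hxa
    set i : (R ⧸ (maximalIdeal R : Submodule R R)) →ₗ[R] (R ⧸ J) :=
      (maximalIdeal R : Submodule R R).liftQ _ hmkerx with hi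
    have hiinj : Function.Injective i := by
      rw [← LinearMap.ker_eq_bot]
      apply Submodule.ker_liftQ_eq_bot
      intro r hr
      rw [LinearMap.mem_ker, LinearMap.toSpanSingleton_apply, ← Submodule.Quotient.mk_smul,
        Submodule.Quotient.mk_eq_zero] at hr
      by_contra hrm
      have hru : IsUnit r := by
        by_contra hru
        exact hrm (hru : r ∈ nonunits R)
      obtain ⟨w, rfl⟩ := hru
      apply hxma
      have : ((w⁻¹ : Rˣ) : R) • ((w : R) • x) ∈ J := Submodule.smul_mem J _ hr
      simpa [smul_smul] using this
    -- apply v-small injectivity to Shrink'd modules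
    set eX := Shrink.linearEquiv R (R ⧸ (maximalIdeal R : Submodule R R))
    set eY := Shrink.linearEquiv R (R ⧸ J)
    obtain ⟨h, hh⟩ := hinj.out (eY.symm.toLinearMap ∘ₗ i ∘ₗ eX.toLinearMap)
      (by
        have hco : ⇑(eY.symm.toLinearMap ∘ₗ i ∘ₗ eX.toLinearMap) = ⇑eY.symm ∘ ⇑i ∘ ⇑eX := rfl
        rw [hco]
        exact eY.symm.injective.comp (hiinj.comp eX.injective))
      (f ∘ₗ eX.toLinearMap)
    -- contradiction
    have hx0 : x ∈ Module.annihilator R E := hxa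
    have h1 := hh (eX.symm (Submodule.Quotient.mk 1))
    rw [LinearMap.comp_apply, LinearMap.comp_apply, LinearMap.comp_apply,
      LinearEquiv.coe_coe, LinearEquiv.coe_coe, LinearEquiv.apply_symm_apply] at h1
    have hival : i (Submodule.Quotient.mk 1) = Submodule.Quotient.mk x := by
      rw [hi, Submodule.liftQ_apply, LinearMap.toSpanSingleton_apply, one_smul]
    have hfval : f (Submodule.Quotient.mk 1) = u := by
      rw [hf, Submodule.liftQ_apply, LinearMap.toSpanSingleton_apply, one_smul]
    rw [hival, hfval] at h1
    -- but h (eY.symm (mk x)) = x • h (eY.symm (mk 1)) = 0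
    have hxsmul : (Submodule.Quotient.mk x : R ⧸ J) = x • (Submodule.Quotient.mk 1 : R ⧸ J) := by
      rw [← Submodule.Quotient.mk_smul, smul_eq_mul, mul_one]
    rw [hxsmul, map_smul, map_smul] at h1
    rw [Module.mem_annihilator] at hx0
    rw [hx0] at h1
    exact hu h1.symm
  -- step 2 : R is small
  haveI hSR : Small.{uE} R := by
    set am : R → (E → E) := fun r e => r • e with ham
    apply small_of_injective (f := am)
    intro r r' h
    have h2 : ∀ e : E, (r - r') • e = 0 := by
      intro e
      rw [sub_smul, sub_eq_zero]
      exact congrFun h e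
    have h3 : r - r' ∈ Module.annihilator R E := Module.mem_annihilator.mpr h2
    rw [hann, Submodule.mem_bot] at h3
    exact sub_eq_zero.mp h3
  exact Module.Baer.of_injective hinj

end Baer

/-- For a local ring `(R, m, k)`, a finitely generated free module `F`, a
finitely generated module `M`, and `φ : F → M`, the map `φ` splits iff `φ ⊗ E_R(k)` is
injective. -/
theorem splits_iff_tensor_injectiveHull_injective
    (R : Type*) [CommRing R] [IsNoetherianRing R] [IsLocalRing R]
    (E : Type*) [AddCommGroup E] [Module R E] (u : E) (hE : IsInjHullSocle R E u)
    (F : Type*) [AddCommGroup F] [Module R F] [Module.Free R F] [Module.Finite R F]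
    (M : Type*) [AddCommGroup M] [Module R M] [Module.Finite R M]
    (φ : F →ₗ[R] M) :
    (∃ ψ : M →ₗ[R] F, ψ ∘ₗ φ = LinearMap.id) ↔
      Function.Injective (LinearMap.rTensor E φ) := by
  obtain ⟨hEinj, hune, hmu, -, -⟩ := hE
  constructor
  · rintro ⟨ψ, hψ⟩
    have hz : ∀ v : F ⊗[R] E, LinearMap.rTensor E ψ (LinearMap.rTensor E φ v) = v := by
      intro v
      rw [← LinearMap.rTensor_comp_apply, hψ, LinearMap.rTensor_id, LinearMap.id_apply]
    intro z w h
    rw [← hz z, ← hz w, h]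
  · intro hinj
    have hB : Module.Baer R E := baer_of_socle hEinj hune hmu
    set ι := Module.Free.ChooseBasisIndex R F with hι
    set n := Fintype.card ι with hn
    set b : Module.Basis (Fin n) R F := (Module.Free.chooseBasis R F).reindex (Fintype.equivFin ι)
      with hb
    set Φ : (M →ₗ[R] R) →ₗ[R] (Fin n → R) :=
      LinearMap.pi (fun j => LinearMap.applyₗ (φ (b j))) with hΦdef
    have hΦ : ∀ (l : M →ₗ[R] R) (j : Fin n), Φ l j = l (φ (b j)) := fun l j => rfl
    have hsurj : Function.Surjective Φ := by
      rw [← LinearMap.range_eq_top]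
      by_contra hne
      obtain ⟨x0, hx0⟩ : ∃ x0 : Fin n → R, x0 ∉ LinearMap.range Φ := by
        by_contra hall
        push_neg at hall
        exact hne (Submodule.eq_top_iff'.mpr hall)
      have hxbar : (Submodule.Quotient.mk x0 : (Fin n → R) ⧸ LinearMap.range Φ) ≠ 0 := by
        rw [ne_eq, Submodule.Quotient.mk_eq_zero]
        exact hx0
      obtain ⟨θ0, hθ0⟩ := exists_functional_ne_zero hB hune hmu hxbar
      set θ : (Fin n → R) →ₗ[R] E := θ0 ∘ₗ (LinearMap.range Φ).mkQ with hθdef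
      have hkill : ∀ l : M →ₗ[R] R, θ (Φ l) = 0 := by
        intro l
        rw [hθdef, LinearMap.comp_apply, Submodule.mkQ_apply,
          show (Submodule.Quotient.mk (Φ l) : (Fin n → R) ⧸ LinearMap.range Φ) = 0 from
            (Submodule.Quotient.mk_eq_zero _).mpr (LinearMap.mem_range_self Φ l), map_zero]
      have hθzero : θ = 0 := by
        set z : F ⊗[R] E := ∑ j, b j ⊗ₜ[R] θ ((Pi.single j 1 : Fin n → R)) with hz
        have hevz : evMap R M E (LinearMap.rTensor E φ z) = 0 := by
          ext l
          rw [evMap_naturality, hz, map_sum, LinearMap.sum_apply]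
          have hterm : ∀ j, evMap R F E (b j ⊗ₜ[R] θ ((Pi.single j 1 : Fin n → R))) (l ∘ₗ φ)
              = θ ((l (φ (b j))) • (Pi.single j 1 : Fin n → R)) := by
            intro j
            rw [evMap_tmul, ← map_smul]
            rfl
          rw [Finset.sum_congr rfl fun j _ => hterm j, ← map_sum,
            show (∑ j, l (φ (b j)) • (Pi.single j 1 : Fin n → R)) = Φ l from ?_, hkill l,
            LinearMap.zero_apply]
          funext i
          rw [Finset.sum_apply]
          simp only [Pi.smul_apply, Pi.single_apply, smul_eq_mul, mul_ite, mul_one, mul_zero]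
          rw [Finset.sum_ite_eq]
          simp [hΦ]
        have hz0 : LinearMap.rTensor E φ z = 0 := by
          apply evMap_injective_fg hB M
          rw [hevz, map_zero]
        have hzz : z = 0 := hinj (by rw [hz0, map_zero])
        have hcomp : ∀ i, θ ((Pi.single i 1 : Fin n → R)) = 0 := by
          intro i
          have h1 : evMap R F E z (b.coord i) = θ ((Pi.single i 1 : Fin n → R)) := by
            rw [hz, map_sum, LinearMap.sum_apply]
            have hterm : ∀ j, evMap R F E (b j ⊗ₜ[R] θ ((Pi.single j 1 : Fin n → R))) (b.coord i)
                = (if j = i then (1 : R) else 0) • θ ((Pi.single j 1 : Fin n → R)) := by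
              intro j
              rw [evMap_tmul, Module.Basis.coord_apply, Module.Basis.repr_self, Finsupp.single_apply]
            rw [Finset.sum_congr rfl fun j _ => hterm j]
            simp only [ite_smul, one_smul, zero_smul]
            rw [Finset.sum_ite_eq']
            simp
          rw [← h1, hzz, map_zero, LinearMap.zero_apply]
        apply LinearMap.ext
        intro vv
        have hvv : vv = ∑ i, vv i • (Pi.single i 1 : Fin n → R) := by
          funext j
          rw [Finset.sum_apply]
          simp only [Pi.smul_apply, Pi.single_apply, smul_eq_mul, mul_ite, mul_one, mul_zero]
          rw [Finset.sum_ite_eq]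
          simp
        rw [hvv, map_sum]
        simp only [map_smul]
        rw [Finset.sum_congr rfl fun i _ => by rw [hcomp i, smul_zero]]
        simp
      apply hθ0
      have h2 := LinearMap.congr_fun hθzero x0
      rw [hθdef, LinearMap.comp_apply, Submodule.mkQ_apply, LinearMap.zero_apply] at h2
      exact h2
    choose lvec hlvec using fun i => hsurj ((Pi.single i 1 : Fin n → R))
    set ψ : M →ₗ[R] F := ∑ i, (LinearMap.toSpanSingleton R F (b i)) ∘ₗ (lvec i) with hψdef
    refine ⟨ψ, ?_⟩
    apply b.ext
    intro j
    rw [LinearMap.comp_apply, LinearMap.id_apply, hψdef, LinearMap.sum_apply]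
    have hterm : ∀ i, ((LinearMap.toSpanSingleton R F (b i)) ∘ₗ (lvec i)) (φ (b j))
        = ((Pi.single i 1 : Fin n → R) j) • b i := by
      intro i
      rw [LinearMap.comp_apply, LinearMap.toSpanSingleton_apply]
      congr 1
      calc lvec i (φ (b j)) = Φ (lvec i) j := rfl
        _ = (Pi.single i 1 : Fin n → R) j := by rw [hlvec i]
    rw [Finset.sum_congr rfl fun i _ => hterm i]
    simp only [Pi.single_apply, ite_smul, one_smul, zero_smul]
    rw [Finset.sum_ite_eq]
    simp
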